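/- Every cube tiling of ℝ² contains a column; that is, if T ⊆ ℝ² determines a cube tiling of ℝ², then there exist s ∈ ℝ² and a standard basis vector eᵢ of ℝ² such that s + k·eᵢ ∈ T for every k ∈ ℤ. -/

import Mathlib

/-- The half-open unit cube `[0,1)ⁿ` translated by `t`. -/
def Cube {n : ℕ} (t : Fin n → ℝ) : Set (Fin n → ℝ) :=
  {x | ∀ j, t j ≤ x j ∧ x j < t j + 1}

/-- `T` determines a cube tiling of `ℝⁿ`: the cubes `[0,1)ⁿ + t`, `t ∈ T`,
are pairwise disjoint and their union is all of `ℝⁿ`. -/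
def IsCubeTiling {n : ℕ} (T : Set (Fin n → ℝ)) : Prop :=
  (∀ s ∈ T, ∀ t ∈ T, s ≠ t → Disjoint (Cube s) (Cube t)) ∧
  (⋃ t ∈ T, Cube t) = Set.univ

/-- `T ⊆ ℝ` determines a tiling of `ℝ` by unit intervals `[0,1) + t`. -/
def IsCubeTiling1 (T : Set ℝ) : Prop :=
  (∀ s ∈ T, ∀ t ∈ T, s ≠ t → Disjoint (Set.Ico s (s + 1)) (Set.Ico t (t + 1))) ∧
  (⋃ t ∈ T, Set.Ico t (t + 1)) = Set.univ

/-- The tiling determined by `T` contains a column: there are `s ∈ ℝⁿ` and a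
standard basis vector `eᵢ` such that `s + k·eᵢ ∈ T` for every `k ∈ ℤ`. -/
def ContainsColumn {n : ℕ} (T : Set (Fin n → ℝ)) : Prop :=
  ∃ s : Fin n → ℝ, ∃ i : Fin n, ∀ k : ℤ, (s + (k : ℝ) • (Pi.single i 1 : Fin n → ℝ)) ∈ T

/-- A natural code of `ℝⁿ`: each `ε j : ℝ → ℕ⁺` restricts to a bijection from
every coset `x + ℤ` onto the positive integers. -/
def IsNaturalCode {n : ℕ} (ε : Fin n → ℝ → ℕ+) : Prop :=
  ∀ j : Fin n, ∀ x : ℝ, Set.BijOn (ε j) {y : ℝ | ∃ m : ℤ, y = x + m} Set.univ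


/-!
A line parallel to a coordinate axis meets the cubes of a tiling in a tiling of the line by unit
intervals, so the tiles it meets have their coordinates along the line in a single coset `a + ℤ`.
In the plane, let `u` be the tile containing the corner `t + e₁` of a tile `t`: then `u` sits
exactly on top of `t`, shifted to the left by some `δ ∈ [0, 1)`. If `δ > 0`, a tile in the row
through `u` not flush with `u` would also share a row with `t`, so its horizontal offset would be
congruent modulo `ℤ` to both `u 0` and `t 0 = u 0 + δ`, which is impossible; hence that row is
flush and forms a horizontal column. Otherwise `t + e₁ ∈ T` for every tile `t`, which forces
`t - e₁ ∈ T` as well, and the tiles `t + k e₁` form a vertical column.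
-/

theorem add_zsmul_mem_of_add_mem_of_sub_mem {G : Type*} [AddGroup G] {S : Set G} {v : G}
    (hadd : ∀ x ∈ S, x + v ∈ S) (hsub : ∀ x ∈ S, x - v ∈ S) {x : G} (hx : x ∈ S) (k : ℤ) :
    x + k • v ∈ S := by
  induction k using Int.induction_on with
  | zero => simpa using hx
  | succ n ih => simpa [add_zsmul, ← add_assoc] using hadd _ ih
  | pred n ih =>
    rw [sub_zsmul, one_zsmul, ← sub_eq_add_neg, ← add_sub_assoc]
    exact hsub _ ih

namespace IsCubeTiling1

variable {S : Set ℝ}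

theorem exists_mem_Ico (hS : IsCubeTiling1 S) (x : ℝ) : ∃ a ∈ S, x ∈ Set.Ico a (a + 1) := by
  obtain ⟨a, ha, hxa⟩ := Set.mem_iUnion₂.1 (hS.2 ▸ Set.mem_univ x : x ∈ ⋃ a ∈ S, Set.Ico a (a + 1))
  exact ⟨a, ha, hxa⟩

theorem eq_of_mem_Ico (hS : IsCubeTiling1 S) {a b x : ℝ} (ha : a ∈ S) (hb : b ∈ S)
    (hxa : x ∈ Set.Ico a (a + 1)) (hxb : x ∈ Set.Ico b (b + 1)) : a = b := by
  by_contra hne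
  exact Set.disjoint_left.mp (hS.1 a ha b hb hne) hxa hxb

theorem add_one_mem (hS : IsCubeTiling1 S) {a : ℝ} (ha : a ∈ S) : a + 1 ∈ S := by
  obtain ⟨b, hb, hb₁, hb₂⟩ := hS.exists_mem_Ico (a + 1)
  obtain rfl | hlt := hb₁.eq_or_lt
  · exact hb
  · exact absurd (hS.eq_of_mem_Ico ha hb ⟨by linarith, hlt⟩ ⟨le_rfl, by linarith⟩) (by linarith)

theorem sub_one_mem (hS : IsCubeTiling1 S) {a : ℝ} (ha : a ∈ S) : a - 1 ∈ S := by
  obtain ⟨b, hb, hb₁, hb₂⟩ := hS.exists_mem_Ico (a - 1)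
  have hba : b + 1 = a := hS.eq_of_mem_Ico (hS.add_one_mem hb) ha (x := a)
    ⟨by linarith, by linarith⟩ ⟨le_rfl, by linarith⟩
  rwa [← hba, add_sub_cancel_right]

theorem add_intCast_mem (hS : IsCubeTiling1 S) {a : ℝ} (ha : a ∈ S) (k : ℤ) : a + k ∈ S := by
  simpa using add_zsmul_mem_of_add_mem_of_sub_mem (fun _ => hS.add_one_mem)
    (fun _ => hS.sub_one_mem) ha k

theorem exists_int_eq_add (hS : IsCubeTiling1 S) {a b : ℝ} (ha : a ∈ S) (hb : b ∈ S) :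
    ∃ k : ℤ, b = a + k :=
  ⟨⌊b - a⌋, hS.eq_of_mem_Ico hb (hS.add_intCast_mem ha _) ⟨le_rfl, by linarith⟩
    ⟨by linarith [Int.floor_le (b - a)], by linarith [Int.lt_floor_add_one (b - a)]⟩⟩

end IsCubeTiling1

section Lines

variable {n : ℕ}

/-- The cube `Cube t` meets the line `x + ℝ eᵢ`. -/
def MeetsLine (t x : Fin n → ℝ) (i : Fin n) : Prop :=
  ∀ j ≠ i, t j ≤ x j ∧ x j < t j + 1

def lineSection (T : Set (Fin n → ℝ)) (x : Fin n → ℝ) (i : Fin n) : Set ℝ :=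
  {a | ∃ t ∈ T, MeetsLine t x i ∧ t i = a}

theorem update_mem_cube_iff {t x : Fin n → ℝ} {i : Fin n} {a : ℝ} :
    Function.update x i a ∈ Cube t ↔ MeetsLine t x i ∧ a ∈ Set.Ico (t i) (t i + 1) := by
  constructor
  · intro h
    exact ⟨fun j hj => by simpa [hj] using h j, by simpa using h i⟩
  · rintro ⟨h, hi⟩ j
    by_cases hj : j = i
    · subst hj
      simpa using hi
    · simpa [hj] using h j hj

theorem mem_cube_add_iff {t v x : Fin n → ℝ} : x ∈ Cube (t + v) ↔ x - v ∈ Cube t := by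
  simp only [Cube, Set.mem_ofPred_eq, Pi.add_apply, Pi.sub_apply]
  refine forall_congr' fun j => ?_
  constructor <;> rintro ⟨h₁, h₂⟩ <;> constructor <;> linarith

theorem meetsLine_zero_iff {t x : Fin 2 → ℝ} : MeetsLine t x 0 ↔ t 1 ≤ x 1 ∧ x 1 < t 1 + 1 := by
  simp [MeetsLine, Fin.forall_fin_two]

end Lines

namespace IsCubeTiling

variable {n : ℕ} {T : Set (Fin n → ℝ)}

theorem exists_mem_cube (hT : IsCubeTiling T) (x : Fin n → ℝ) : ∃ t ∈ T, x ∈ Cube t := by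
  obtain ⟨t, ht, hxt⟩ := Set.mem_iUnion₂.1 (hT.2 ▸ Set.mem_univ x : x ∈ ⋃ t ∈ T, Cube t)
  exact ⟨t, ht, hxt⟩

theorem eq_of_mem_cube (hT : IsCubeTiling T) {s t x : Fin n → ℝ} (hs : s ∈ T) (ht : t ∈ T)
    (hxs : x ∈ Cube s) (hxt : x ∈ Cube t) : s = t := by
  by_contra hne
  exact Set.disjoint_left.mp (hT.1 s hs t ht hne) hxs hxt

theorem eq_of_dist_lt_one (hT : IsCubeTiling T) {s t : Fin n → ℝ} (hs : s ∈ T) (ht : t ∈ T)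
    (hst : dist s t < 1) : s = t := by
  rw [dist_pi_lt_iff one_pos] at hst
  refine hT.eq_of_mem_cube hs ht (x := s ⊔ t) (fun j => ?_) (fun j => ?_) <;>
  · have := abs_sub_lt_iff.mp (Real.dist_eq _ _ ▸ hst j)
    exact ⟨by simp, max_lt (by linarith) (by linarith)⟩

theorem apply_eq_add_one_of_add_single_mem_cube (hT : IsCubeTiling T) {t u : Fin n → ℝ}
    {i : Fin n} (ht : t ∈ T) (hu : u ∈ T) (hcorner : t + Pi.single i 1 ∈ Cube u) :
    u i = t i + 1 := by
  have hi : u i ≤ t i + 1 ∧ t i + 1 < u i + 1 := by simpa using hcorner i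
  by_contra hne
  have hclose : dist u t < 1 := by
    refine (dist_pi_lt_iff one_pos).2 fun j => ?_
    rw [Real.dist_eq, abs_sub_lt_iff]
    by_cases hj : j = i
    · subst hj
      have := lt_of_le_of_ne hi.1 hne
      constructor <;> linarith
    · have := hcorner j
      simp only [Pi.add_apply, Pi.single_eq_of_ne hj, add_zero] at this
      constructor <;> linarith
  have := hT.eq_of_dist_lt_one hu ht hclose
  subst this
  linarith

theorem isCubeTiling1_lineSection (hT : IsCubeTiling T) (x : Fin n → ℝ) (i : Fin n) :
    IsCubeTiling1 (lineSection T x i) := by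
  refine ⟨?_, Set.eq_univ_of_forall fun a => ?_⟩
  · rintro _ ⟨s, hs, hsx, rfl⟩ _ ⟨t, ht, htx, rfl⟩ hne
    refine Set.disjoint_left.mpr fun a has hat => hne ?_
    rw [hT.eq_of_mem_cube hs ht (update_mem_cube_iff.2 ⟨hsx, has⟩)
      (update_mem_cube_iff.2 ⟨htx, hat⟩)]
  · obtain ⟨t, ht, hxt⟩ := hT.exists_mem_cube (Function.update x i a)
    rw [update_mem_cube_iff] at hxt
    exact Set.mem_iUnion₂.2 ⟨t i, ⟨t, ht, hxt.1, rfl⟩, hxt.2⟩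

theorem exists_int_eq_add_of_meetsLine (hT : IsCubeTiling T) {s t x : Fin n → ℝ} {i : Fin n}
    (hs : s ∈ T) (ht : t ∈ T) (hsx : MeetsLine s x i) (htx : MeetsLine t x i) :
    ∃ k : ℤ, t i = s i + k :=
  (hT.isCubeTiling1_lineSection x i).exists_int_eq_add ⟨s, hs, hsx, rfl⟩ ⟨t, ht, htx, rfl⟩

theorem add_smul_single_mem_of_aligned (hT : IsCubeTiling T) {v : Fin n → ℝ} {i : Fin n}
    (hv : v ∈ T) (haligned : ∀ t ∈ T, MeetsLine t v i → ∀ j ≠ i, t j = v j) (k : ℤ) :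
    v + (k : ℝ) • Pi.single i 1 ∈ T := by
  have hvv : MeetsLine v v i := fun j _ => ⟨le_rfl, lt_add_one _⟩
  obtain ⟨t, ht, htv, hti⟩ :=
    (hT.isCubeTiling1_lineSection v i).add_intCast_mem ⟨v, hv, hvv, rfl⟩ k
  convert ht using 1
  funext j
  by_cases hj : j = i
  · subst hj
    simp [hti]
  · simp [hj, haligned t ht htv j hj]

theorem sub_single_mem_of_forall_add_single_mem (hT : IsCubeTiling T) {i : Fin n}
    (hup : ∀ t ∈ T, t + Pi.single i 1 ∈ T) {t : Fin n → ℝ} (ht : t ∈ T) :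
    t - Pi.single i 1 ∈ T := by
  obtain ⟨s, hs, hts⟩ := hT.exists_mem_cube (t - Pi.single i 1)
  have hst : s + Pi.single i 1 = t :=
    hT.eq_of_mem_cube (hup s hs) ht (mem_cube_add_iff.2 hts) fun j => ⟨le_rfl, lt_add_one _⟩
  rwa [← hst, add_sub_cancel_right]

theorem add_single_one_mem_of_not_row {T : Set (Fin 2 → ℝ)} (hT : IsCubeTiling T)
    (hrow : ¬ ∃ v, ∀ k : ℤ, v + (k : ℝ) • Pi.single 0 1 ∈ T) {t : Fin 2 → ℝ} (ht : t ∈ T) :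
    t + Pi.single 1 1 ∈ T := by
  obtain ⟨u, hu, hcorner⟩ := hT.exists_mem_cube (t + Pi.single 1 1)
  have hu₁ : u 1 = t 1 + 1 := hT.apply_eq_add_one_of_add_single_mem_cube ht hu hcorner
  have hu₀ : u 0 ≤ t 0 ∧ t 0 < u 0 + 1 := by simpa using hcorner 0
  obtain heq | hlt := hu₀.1.eq_or_lt
  · convert hu using 1
    funext j
    fin_cases j <;> simp [heq, hu₁]
  refine absurd ⟨u, hT.add_smul_single_mem_of_aligned hu fun r hr hru j hj => ?_⟩ hrow
  obtain rfl : j = 1 := by fin_cases j <;> simp_all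
  rw [meetsLine_zero_iff] at hru
  by_contra hne
  -- `r` is not flush with `u`, so it also shares the row at height `r 1` with `t`
  obtain ⟨k, hk⟩ := hT.exists_int_eq_add_of_meetsLine ht hr (x := r)
    (meetsLine_zero_iff.2 ⟨by linarith, by linarith [lt_of_le_of_ne hru.1 hne]⟩)
    (meetsLine_zero_iff.2 ⟨le_rfl, lt_add_one _⟩)
  obtain ⟨m, hm⟩ := hT.exists_int_eq_add_of_meetsLine hu hr (x := u)
    (meetsLine_zero_iff.2 ⟨le_rfl, lt_add_one _⟩) (meetsLine_zero_iff.2 hru)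
  have h₀ : (0 : ℤ) < m - k := by exact_mod_cast (by linarith : (0 : ℝ) < m - k)
  have h₁ : m - k < (1 : ℤ) := by exact_mod_cast (by linarith : (m : ℝ) - k < 1)
  omega

end IsCubeTiling

/-- Every cube tiling of ℝ^2 contains a column. -/
theorem cube_tiling_dim2_contains_column (T : Set (Fin 2 → ℝ)) (hT : IsCubeTiling T) :
    ∃ s : Fin 2 → ℝ, ∃ i : Fin 2, ∀ k : ℤ, (s + (k : ℝ) • (Pi.single i 1 : Fin 2 → ℝ)) ∈ T := by
  by_cases hrow : ∃ v, ∀ k : ℤ, v + (k : ℝ) • (Pi.single 0 1 : Fin 2 → ℝ) ∈ T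
  · obtain ⟨v, hv⟩ := hrow
    exact ⟨v, 0, hv⟩
  obtain ⟨t, ht, -⟩ := hT.exists_mem_cube 0
  have hup := fun s (hs : s ∈ T) => hT.add_single_one_mem_of_not_row hrow hs
  have hdown := fun s (hs : s ∈ T) => hT.sub_single_mem_of_forall_add_single_mem hup hs
  refine ⟨t, 1, fun k => ?_⟩
  rw [Int.cast_smul_eq_zsmul]
  exact add_zsmul_mem_of_add_mem_of_sub_mem hup hdown ht k
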